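/- arXiv:2502.05488 — 2 statements merged into one kernel-verified Lean document; each statement's English description precedes it below -/
import Mathlib

section
/- For every graph G on n vertices with at least one edge, mod(G) ≤ 4 · max over subsets S ⊆ V(G) with |S| ≥ n/2 of ( e(S)/e(G) − (vol(S)/vol(G))² ). -/
/-!
Let `B = A / vol G - d dᵀ / (vol G)²` be the modularity matrix, so that the term of a vertex set
`S` in a modularity score is `q S = ∑_{u,v ∈ S} B u v`. As `B` is symmetric with zero row sums,
`q Sᶜ = q S`, and the bilinear cross terms `∑_{u ∈ T, v ∈ T'} B u v` summed over all pairs of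
parts of a partition vanish. Averaging `q` over the unions of all subfamilies of parts counts
each cross term between two distinct parts in a quarter of the subfamilies and each diagonal term
in half of them, so the average is a quarter of the score. Some union `S` thus has `4 q S` at
least the score, and one of `S`, `Sᶜ` contains half of the vertices.
-/

open MeasureTheory Filter Topology
open scoped Classical

namespace RIG

variable {V : Type*}

/-- The number of edges of a graph. -/
noncomputable def edgeCount [Fintype V] (G : SimpleGraph V) : ℕ := G.edgeSet.ncard

/-- The number of edges of `G` with both endpoints in `S`. -/
noncomputable def edgesIn [Fintype V] (G : SimpleGraph V) (S : Finset V) : ℕ :=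
  {e ∈ G.edgeSet | ∀ v ∈ e, v ∈ S}.ncard

/-- The number of edges of `G` with exactly one endpoint in `S`. -/
noncomputable def crossEdges [Fintype V] (G : SimpleGraph V) (S : Finset V) : ℕ :=
  {e ∈ G.edgeSet | (∃ v ∈ e, v ∈ S) ∧ ∃ v ∈ e, v ∉ S}.ncard

/-- The sum of the degrees (in `G`) of the vertices of `S`. -/
noncomputable def vol [Fintype V] (G : SimpleGraph V) (S : Finset V) : ℕ :=
  ∑ v ∈ S, G.degree v

/-- The modularity score of a partition of the vertex set. -/
noncomputable def modScore [Fintype V] [DecidableEq V] (G : SimpleGraph V)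
    (P : Finpartition (Finset.univ : Finset V)) : ℝ :=
  ∑ S ∈ P.parts,
    ((edgesIn G S : ℝ) / (edgeCount G : ℝ) -
      ((vol G S : ℝ) / (vol G Finset.univ : ℝ)) ^ 2)

/-- The modularity of a graph: the maximum of the modularity scores over all
partitions of the vertex set. -/
noncomputable def modularity [Fintype V] [DecidableEq V] (G : SimpleGraph V) : ℝ :=
  ⨆ P : Finpartition (Finset.univ : Finset V), modScore G P

/-- The Bernoulli measure on `Bool` with success probability `p`. -/
noncomputable def bernoulliB (p : ℝ) : Measure Bool :=
  ENNReal.ofReal p • Measure.dirac true + ENNReal.ofReal (1 - p) • Measure.dirac false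

/-- The law of the attribute assignment of the binomial random intersection graph
`G(n,m,p)`: each vertex chooses each attribute independently with probability `p`. -/
noncomputable def rigMeasure (n m : ℕ) (p : ℝ) : Measure (Fin n → Fin m → Bool) :=
  Measure.pi fun _ => Measure.pi fun _ => bernoulliB p

/-- The intersection graph determined by an attribute assignment: two distinct vertices
are adjacent iff they share an attribute. -/
def rigGraph {n m : ℕ} (ω : Fin n → Fin m → Bool) : SimpleGraph (Fin n) :=
  SimpleGraph.fromRel fun u v => ∃ i, ω u i = true ∧ ω v i = true

open Finset

section PowersetSums

variable {ι R : Type*} [DecidableEq ι] [CommRing R]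

theorem two_mul_sum_powerset_sum (s : Finset ι) (c : ι → R) :
    2 * ∑ t ∈ s.powerset, ∑ i ∈ t, c i = 2 ^ #s * ∑ i ∈ s, c i := by
  induction s using Finset.induction_on with
  | empty => simp
  | insert a s ha ih =>
    have hins : ∀ t ∈ s.powerset, ∑ i ∈ insert a t, c i = c a + ∑ i ∈ t, c i := fun t ht =>
      sum_insert fun hat => ha (mem_powerset.mp ht hat)
    rw [sum_powerset_insert ha, sum_congr rfl hins, sum_add_distrib, sum_const, card_powerset,
      nsmul_eq_mul, card_insert_of_notMem ha, sum_insert ha]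
    push_cast
    linear_combination (2 : R) * ih

theorem four_mul_sum_powerset_sum_sum (s : Finset ι) (b : ι → ι → R) :
    4 * ∑ t ∈ s.powerset, ∑ i ∈ t, ∑ j ∈ t, b i j =
      2 ^ #s * (∑ i ∈ s, ∑ j ∈ s, b i j + ∑ i ∈ s, b i i) := by
  induction s using Finset.induction_on with
  | empty => simp
  | insert a s ha ih =>
    have hins : ∀ t ∈ s.powerset, ∑ i ∈ insert a t, ∑ j ∈ insert a t, b i j =
        b a a + ∑ j ∈ t, (b a j + b j a) + ∑ i ∈ t, ∑ j ∈ t, b i j := fun t ht => by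
      have hat : a ∉ t := fun hat => ha (mem_powerset.mp ht hat)
      simp only [sum_insert hat, sum_add_distrib]
      ring
    have hlin := two_mul_sum_powerset_sum s fun j => b a j + b j a
    rw [sum_powerset_insert ha, sum_congr rfl hins, sum_add_distrib, sum_add_distrib, sum_const,
      card_powerset, nsmul_eq_mul, card_insert_of_notMem ha]
    simp only [sum_insert ha, sum_add_distrib] at hlin ⊢
    push_cast
    linear_combination (2 : R) * ih + 2 * hlin

theorem exists_subset_sum_diag_le_four_mul_sum_sum [LinearOrder R] [IsOrderedRing R]
    {s : Finset ι} {b : ι → ι → R} (hb : ∑ i ∈ s, ∑ j ∈ s, b i j = 0) :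
    ∃ t ⊆ s, ∑ i ∈ s, b i i ≤ 4 * ∑ i ∈ t, ∑ j ∈ t, b i j := by
  have hsum : ∑ _t ∈ s.powerset, ∑ i ∈ s, b i i =
      ∑ t ∈ s.powerset, 4 * ∑ i ∈ t, ∑ j ∈ t, b i j := by
    rw [← mul_sum, four_mul_sum_powerset_sum_sum, hb, zero_add, sum_const, card_powerset,
      nsmul_eq_mul, Nat.cast_pow, Nat.cast_ofNat]
  obtain ⟨t, ht, hle⟩ := exists_le_of_sum_le (powerset_nonempty s) hsum.le
  exact ⟨t, mem_powerset.mp ht, hle⟩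

end PowersetSums

section ZeroRowSums

variable {R : Type*} [DecidableEq V]

theorem sum_sum_biUnion [AddCommMonoid R] {ι : Type*} {s : Finset ι} {f : ι → Finset V}
    (hf : (s : Set ι).PairwiseDisjoint f) (B : V → V → R) :
    ∑ u ∈ s.biUnion f, ∑ v ∈ s.biUnion f, B u v =
      ∑ i ∈ s, ∑ j ∈ s, ∑ u ∈ f i, ∑ v ∈ f j, B u v := by
  rw [sum_biUnion hf]
  refine sum_congr rfl fun i _ => ?_
  rw [sum_comm, sum_biUnion hf]
  exact sum_congr rfl fun j _ => sum_comm

variable [Fintype V] {B : V → V → R}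

theorem sum_sum_compl [AddCommGroup R] (hB : ∀ u v, B u v = B v u) (hrow : ∀ u, ∑ v, B u v = 0)
    (S : Finset V) :
    ∑ u ∈ Sᶜ, ∑ v ∈ Sᶜ, B u v = ∑ u ∈ S, ∑ v ∈ S, B u v := by
  have hsplit : ∀ u, ∑ v ∈ S, B u v + ∑ v ∈ Sᶜ, B u v = 0 := fun u => by
    rw [sum_add_sum_compl, hrow]
  have hS : ∑ u ∈ S, ∑ v ∈ S, B u v + ∑ u ∈ S, ∑ v ∈ Sᶜ, B u v = 0 := by
    rw [← sum_add_distrib, sum_eq_zero fun u _ => hsplit u]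
  have hSc : ∑ u ∈ Sᶜ, ∑ v ∈ S, B u v + ∑ u ∈ Sᶜ, ∑ v ∈ Sᶜ, B u v = 0 := by
    rw [← sum_add_distrib, sum_eq_zero fun u _ => hsplit u]
  have hcross : ∑ u ∈ Sᶜ, ∑ v ∈ S, B u v = ∑ u ∈ S, ∑ v ∈ Sᶜ, B u v := by
    rw [sum_comm]
    exact sum_congr rfl fun u _ => sum_congr rfl fun v _ => hB v u
  rw [hcross] at hSc
  rw [eq_neg_of_add_eq_zero_right hSc]
  exact (eq_neg_of_add_eq_zero_left hS).symm

theorem exists_two_mul_card_ge_sum_parts_le_four_mul [CommRing R] [LinearOrder R]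
    [IsOrderedRing R] (hB : ∀ u v, B u v = B v u) (hrow : ∀ u, ∑ v, B u v = 0)
    (P : Finpartition (univ : Finset V)) :
    ∃ S : Finset V, Fintype.card V ≤ 2 * #S ∧
      ∑ T ∈ P.parts, ∑ u ∈ T, ∑ v ∈ T, B u v ≤ 4 * ∑ u ∈ S, ∑ v ∈ S, B u v := by
  have hunion : ∀ I ⊆ P.parts, ∑ u ∈ I.biUnion id, ∑ v ∈ I.biUnion id, B u v =
      ∑ T ∈ I, ∑ T' ∈ I, ∑ u ∈ T, ∑ v ∈ T', B u v := fun I hI =>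
    sum_sum_biUnion (P.disjoint.subset (coe_subset.mpr hI)) B
  have htotal : ∑ T ∈ P.parts, ∑ T' ∈ P.parts, ∑ u ∈ T, ∑ v ∈ T', B u v = 0 := by
    rw [← hunion _ subset_rfl, P.biUnion_parts]
    exact sum_eq_zero fun u _ => hrow u
  obtain ⟨I, hI, hle⟩ := exists_subset_sum_diag_le_four_mul_sum_sum htotal
  rw [← hunion I hI] at hle
  rcases le_or_gt (Fintype.card V) (2 * #(I.biUnion id)) with hbig | hsmall
  · exact ⟨_, hbig, hle⟩
  · refine ⟨(I.biUnion id)ᶜ, ?_, by rwa [sum_sum_compl hB hrow]⟩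
    rw [card_compl]
    omega

end ZeroRowSums

section ModularityMatrix

variable [Fintype V]

noncomputable def modularityMatrix (G : SimpleGraph V) (u v : V) : ℝ :=
  (if G.Adj u v then 1 else 0) / vol G univ - G.degree u * G.degree v / (vol G univ : ℝ) ^ 2

theorem modularityMatrix_comm (G : SimpleGraph V) (u v : V) :
    modularityMatrix G u v = modularityMatrix G v u := by
  rw [modularityMatrix, modularityMatrix, G.adj_comm, mul_comm (G.degree u : ℝ)]

theorem sum_ite_adj (G : SimpleGraph V) (u : V) :
    ∑ v, (if G.Adj u v then 1 else 0 : ℝ) = G.degree u := by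
  rw [sum_boole, ← G.card_neighborFinset_eq_degree, G.neighborFinset_eq_filter]

theorem sum_modularityMatrix (G : SimpleGraph V) (u : V) : ∑ v, modularityMatrix G u v = 0 := by
  have hvol : ∑ v, (G.degree v : ℝ) = vol G univ := by rw [vol, Nat.cast_sum]
  simp only [modularityMatrix, sum_sub_distrib, ← sum_div, ← mul_sum, sum_ite_adj, hvol]
  rcases eq_or_ne (vol G univ : ℝ) 0 with h | h
  · simp [h]
  · field_simp
    ring

theorem two_mul_edgesIn (G : SimpleGraph V) (S : Finset V) :
    2 * edgesIn G S = ∑ u ∈ S, ∑ v ∈ S, if G.Adj u v then 1 else 0 := by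
  set H := (G.induce (S : Set V)).spanningCoe
  have hedges : {e ∈ G.edgeSet | ∀ v ∈ e, v ∈ S} = H.edgeSet := by
    ext e
    induction e using Sym2.ind
    simp [H]
  have hdarts : univ.filter (fun x : V × V => H.Adj x.1 x.2) =
      (S ×ˢ S).filter (fun x => G.Adj x.1 x.2) := by
    ext
    simp [H]
    tauto
  rw [edgesIn, hedges, ← SimpleGraph.coe_edgeFinset, Set.ncard_coe_finset,
    SimpleGraph.two_mul_card_edgeFinset, hdarts, card_filter, sum_product]

theorem vol_univ_eq_two_mul_edgeCount (G : SimpleGraph V) : vol G univ = 2 * edgeCount G := by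
  rw [vol, G.sum_degrees_eq_twice_card_edges, edgeCount, ← SimpleGraph.coe_edgeFinset,
    Set.ncard_coe_finset]

theorem edgesIn_div_sub_sq_eq_sum_sum_modularityMatrix (G : SimpleGraph V) (S : Finset V) :
    (edgesIn G S : ℝ) / edgeCount G - ((vol G S : ℝ) / vol G univ) ^ 2 =
      ∑ u ∈ S, ∑ v ∈ S, modularityMatrix G u v := by
  have hedges : ∑ u ∈ S, ∑ v ∈ S, (if G.Adj u v then 1 else 0 : ℝ) = 2 * edgesIn G S := by
    exact_mod_cast (two_mul_edgesIn G S).symm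
  have hvol : (vol G S : ℝ) ^ 2 = ∑ u ∈ S, ∑ v ∈ S, (G.degree u * G.degree v : ℝ) := by
    rw [vol, Nat.cast_sum, sq, sum_mul_sum]
  simp only [modularityMatrix, sum_sub_distrib, ← sum_div, hedges, ← hvol, div_pow, vol_univ_eq_two_mul_edgeCount]
  push_cast
  rw [mul_div_mul_left _ _ two_ne_zero]

end ModularityMatrix

theorem modularity_le_four_mul_max_half_general {V : Type*} [Fintype V] [DecidableEq V]
    (G : SimpleGraph V) :
    modularity G ≤ 4 *
      sSup {x : ℝ | ∃ S : Finset V, Fintype.card V ≤ 2 * S.card ∧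
        x = (edgesIn G S : ℝ) / (edgeCount G : ℝ) -
          ((vol G S : ℝ) / (vol G Finset.univ : ℝ)) ^ 2} := by
  set q : Finset V → ℝ := fun S =>
    (edgesIn G S : ℝ) / edgeCount G - ((vol G S : ℝ) / vol G univ) ^ 2
  have hbdd : BddAbove {x : ℝ | ∃ S : Finset V, Fintype.card V ≤ 2 * S.card ∧ x = q S} :=
    (Set.finite_range q).bddAbove.mono <| by rintro x ⟨S, -, rfl⟩; exact ⟨S, rfl⟩
  refine ciSup_le fun P => ?_
  obtain ⟨S, hS, hle⟩ := exists_two_mul_card_ge_sum_parts_le_four_mul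
    (modularityMatrix_comm G) (sum_modularityMatrix G) P
  calc modScore G P = ∑ T ∈ P.parts, q T := rfl
    _ ≤ 4 * q S := by simpa only [q, edgesIn_div_sub_sq_eq_sum_sum_modularityMatrix] using hle
    _ ≤ _ := by gcongr; exact le_csSup hbdd ⟨S, hS, rfl⟩

/-- Corollary (corollary:OnlySbig): for a graph `G` on `n` vertices with at least
one edge,
`mod(G) ≤ 4 · max_{S ⊆ V, |S| ≥ n/2} ( e(S)/e(G) - (vol(S)/vol(G))² )`. -/
theorem modularity_le_four_mul_max_half {V : Type*} [Fintype V] [DecidableEq V]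
    (G : SimpleGraph V) (hG : G.edgeSet.Nonempty) :
    modularity G ≤ 4 *
      sSup {x : ℝ | ∃ S : Finset V, Fintype.card V ≤ 2 * S.card ∧
        x = (edgesIn G S : ℝ) / (edgeCount G : ℝ) -
          ((vol G S : ℝ) / (vol G Finset.univ : ℝ)) ^ 2} :=
  modularity_le_four_mul_max_half_general G

end RIG
end

section
/- Suppose m = m_n and p = p_n satisfy n p → ∞ as n → ∞. For integers k ≥ 5 let N_k = |{ i ∈ [m] : |𝒱(w_i)| ≥ k n p }|. Then the probability that there exists some k ≥ 5 with N_k ≥ e^{−k n p / 2} m is at most Σ_{k=5}^∞ e^{−k n p / 6}, which tends to 0 as n → ∞; in particular, with high probability N_k < e^{−k n p / 2} m simultaneously for all k ≥ 5. -/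
/-!
Each `|𝒱(w_i)|` is a sum of `n` independent Bernoulli(`p`) variables, so the exponential Markov
inequality with `t = 2` gives `P(|𝒱(w_i)| ≥ knp) ≤ exp(-2knp + np(e² - 1)) ≤ e^{-knp/2} e^{-knp/6}`
for `k ≥ 5`. Hence `E N_k ≤ e^{-knp/2} m e^{-knp/6}`, and Markov's inequality bounds
`P(N_k ≥ e^{-knp/2} m)` by `e^{-knp/6}`. A union bound over `k ≥ 5` gives the series, which is
dominated by `e^{-5np/6}` times a fixed geometric series once `np ≥ 1`.
-/

open MeasureTheory Filter Topology
open scoped Classical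

namespace RIG

variable {V : Type*}

/-- `V_i = |𝒱(w_i)|`, the number of vertices possessing attribute `w_i`. -/
def Vcount {n m : ℕ} (ω : Fin n → Fin m → Bool) (i : Fin m) : ℕ :=
  (Finset.univ.filter fun v : Fin n => ω v i = true).card

/-- `N_k = |{ i ∈ [m] : V_i ≥ k n p }|`. -/
noncomputable def Nbig {n m : ℕ} (ω : Fin n → Fin m → Bool) (k : ℕ) (q : ℝ) : ℕ :=
  (Finset.univ.filter fun i : Fin m => (k : ℝ) * ((n : ℝ) * q) ≤ (Vcount ω i : ℝ)).card
open ProbabilityTheory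
open scoped ENNReal

lemma exp_two_sub_one_le : Real.exp 2 - 1 ≤ 20 / 3 := by
  have he : Real.exp 2 = Real.exp 1 * Real.exp 1 := by rw [← Real.exp_add]; norm_num
  nlinarith [Real.exp_one_lt_d9, Real.exp_pos 1]

section Bernoulli

variable {p : ℝ}

lemma isProbabilityMeasure_bernoulliB (h0 : 0 ≤ p) (h1 : p ≤ 1) :
    IsProbabilityMeasure (bernoulliB p) := by
  constructor
  simp [bernoulliB, ← ENNReal.ofReal_add h0 (sub_nonneg.2 h1)]

lemma lintegral_bernoulliB (f : Bool → ℝ≥0∞) :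
    ∫⁻ b, f b ∂bernoulliB p = ENNReal.ofReal p * f true + ENNReal.ofReal (1 - p) * f false := by
  simp [bernoulliB, lintegral_add_measure, lintegral_smul_measure, lintegral_dirac]

end Bernoulli

section RandomIntersectionGraph

variable {n m : ℕ} {p : ℝ}

lemma isProbabilityMeasure_rigMeasure (h0 : 0 ≤ p) (h1 : p ≤ 1) :
    IsProbabilityMeasure (rigMeasure n m p) := by
  have := isProbabilityMeasure_bernoulliB h0 h1
  unfold rigMeasure
  infer_instance

lemma lintegral_rigMeasure_apply_apply (h0 : 0 ≤ p) (h1 : p ≤ 1) (v : Fin n) (i : Fin m)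
    (f : Bool → ℝ≥0∞) :
    ∫⁻ ω, f (ω v i) ∂rigMeasure n m p = ∫⁻ b, f b ∂bernoulliB p := by
  have := isProbabilityMeasure_bernoulliB h0 h1
  exact ((measurePreserving_eval (fun _ : Fin m => bernoulliB p) i).comp
    (measurePreserving_eval (fun _ : Fin n => Measure.pi fun _ => bernoulliB p) v)).lintegral_comp
    .of_discrete

lemma lintegral_pow_Vcount (h0 : 0 ≤ p) (h1 : p ≤ 1) (i : Fin m) (z : ℝ≥0∞) :
    ∫⁻ ω, z ^ Vcount ω i ∂rigMeasure n m p =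
      (ENNReal.ofReal p * z + ENNReal.ofReal (1 - p)) ^ n := by
  have := isProbabilityMeasure_bernoulliB h0 h1
  have hfactor (ω : Fin n → Fin m → Bool) :
      z ^ Vcount ω i = ∏ v, if ω v i then z else 1 := by
    simp [Vcount, Finset.prod_ite]
  have hindep : iIndepFun (fun v (ω : Fin n → Fin m → Bool) => if ω v i then z else 1)
      (rigMeasure n m p) :=
    iIndepFun_pi (X := fun _ (y : Fin m → Bool) => if y i then z else 1)
      fun _ => Measurable.of_discrete.aemeasurable
  simp_rw [hfactor]
  rw [lintegral_prod_eq_prod_lintegral_of_indepFun _ _ hindep fun _ => .of_discrete]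
  simp [lintegral_rigMeasure_apply_apply h0 h1 _ i (fun b => if b then z else 1),
    lintegral_bernoulliB]

lemma rigMeasure_le_Vcount_le (h0 : 0 ≤ p) (h1 : p ≤ 1) (i : Fin m) {t : ℝ} (ht : 0 ≤ t)
    (a : ℝ) :
    rigMeasure n m p {ω | a ≤ Vcount ω i} ≤
      ENNReal.ofReal (Real.exp (-(t * a) + n * p * (Real.exp t - 1))) := by
  set z := ENNReal.ofReal (Real.exp t)
  have hsub : {ω : Fin n → Fin m → Bool | a ≤ Vcount ω i} ⊆
      {ω | ENNReal.ofReal (Real.exp (t * a)) ≤ z ^ Vcount ω i} := fun ω (hω : a ≤ _) => by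
    rw [Set.mem_ofPred_eq, ← ENNReal.ofReal_pow (Real.exp_nonneg t), ← Real.exp_nat_mul]
    exact ENNReal.ofReal_le_ofReal (Real.exp_le_exp.2 (by nlinarith))
  have hmgf : ENNReal.ofReal p * z + ENNReal.ofReal (1 - p) ≤
      ENNReal.ofReal (Real.exp (p * (Real.exp t - 1))) := by
    rw [← ENNReal.ofReal_mul h0, ← ENNReal.ofReal_add (by positivity) (by linarith)]
    gcongr
    linarith [Real.add_one_le_exp (p * (Real.exp t - 1))]
  calc rigMeasure n m p {ω | a ≤ Vcount ω i}
      ≤ (∫⁻ ω, z ^ Vcount ω i ∂rigMeasure n m p) / ENNReal.ofReal (Real.exp (t * a)) :=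
        (measure_mono hsub).trans (meas_ge_le_lintegral_div Measurable.of_discrete.aemeasurable
          (by positivity) ENNReal.ofReal_ne_top)
    _ ≤ ENNReal.ofReal (Real.exp (p * (Real.exp t - 1))) ^ n
          / ENNReal.ofReal (Real.exp (t * a)) := by
        rw [lintegral_pow_Vcount h0 h1]
        gcongr
    _ = ENNReal.ofReal (Real.exp (-(t * a) + n * p * (Real.exp t - 1))) := by
        rw [← ENNReal.ofReal_pow (Real.exp_nonneg _), ← Real.exp_nat_mul,
          ← ENNReal.ofReal_div_of_pos (Real.exp_pos _), ← Real.exp_sub]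
        ring_nf

lemma lintegral_Nbig (μ : Measure (Fin n → Fin m → Bool)) (k : ℕ) (q : ℝ) :
    ∫⁻ ω, (Nbig ω k q : ℝ≥0∞) ∂μ = ∑ i, μ {ω | k * (n * q) ≤ (Vcount ω i : ℝ)} := by
  have hsum (ω : Fin n → Fin m → Bool) : (Nbig ω k q : ℝ≥0∞) =
      ∑ i, {ω | k * (n * q) ≤ (Vcount ω i : ℝ)}.indicator 1 ω := by
    rw [Nbig, Finset.card_filter]
    push_cast
    simp [Set.indicator_apply]
  simp_rw [hsum]
  rw [lintegral_finsetSum _ fun _ _ => Measurable.of_discrete]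
  simp [lintegral_indicator_one MeasurableSet.of_discrete]

lemma rigMeasure_exp_mul_le_Nbig_le (h0 : 0 ≤ p) (h1 : p ≤ 1) (hm : m ≠ 0) {k : ℕ}
    (hk : 5 ≤ k) :
    rigMeasure n m p {ω | Real.exp (-(k * (n * p)) / 2) * m ≤ (Nbig ω k p : ℝ)} ≤
      ENNReal.ofReal (Real.exp (-(k * (n * p)) / 6)) := by
  set a : ℝ := k * (n * p)
  set ε := ENNReal.ofReal (Real.exp (-a / 2) * m) with hε_def
  have hε : ε ≠ 0 := by positivity
  have hset : {ω : Fin n → Fin m → Bool | Real.exp (-a / 2) * m ≤ (Nbig ω k p : ℝ)} =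
      {ω | ε ≤ Nbig ω k p} := by
    ext ω
    rw [Set.mem_ofPred_eq, Set.mem_ofPred_eq, ← ENNReal.ofReal_natCast,
      ENNReal.ofReal_le_ofReal_iff (Nat.cast_nonneg _)]
  -- Chernoff with `t = 2`: since `e² - 1 ≤ 4k/3`, the exponent is at most `-a/2 - a/6`.
  have hcol (i : Fin m) : rigMeasure n m p {ω | a ≤ (Vcount ω i : ℝ)} ≤
      ENNReal.ofReal (Real.exp (-a / 2)) * ENNReal.ofReal (Real.exp (-a / 6)) := by
    refine (rigMeasure_le_Vcount_le h0 h1 i zero_le_two a).trans ?_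
    rw [← ENNReal.ofReal_mul (Real.exp_nonneg _), ← Real.exp_add]
    refine ENNReal.ofReal_le_ofReal (Real.exp_le_exp.2 ?_)
    have hk' : (5 : ℝ) ≤ k := by exact_mod_cast hk
    have hnp : 0 ≤ (n : ℝ) * p := by positivity
    nlinarith [exp_two_sub_one_le]
  have hmean : ∫⁻ ω, (Nbig ω k p : ℝ≥0∞) ∂rigMeasure n m p ≤
      ε * ENNReal.ofReal (Real.exp (-a / 6)) := by
    rw [lintegral_Nbig]
    calc ∑ i, rigMeasure n m p {ω | a ≤ (Vcount ω i : ℝ)}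
        ≤ ∑ _i : Fin m, ENNReal.ofReal (Real.exp (-a / 2)) * ENNReal.ofReal (Real.exp (-a / 6)) :=
          Finset.sum_le_sum fun i _ => hcol i
      _ = ε * ENNReal.ofReal (Real.exp (-a / 6)) := by
          rw [Finset.sum_const, Finset.card_univ, Fintype.card_fin, nsmul_eq_mul, hε_def,
            ENNReal.ofReal_mul (Real.exp_nonneg _), ENNReal.ofReal_natCast]
          ring
  rw [hset]
  exact (meas_ge_le_lintegral_div Measurable.of_discrete.aemeasurable hε
    ENNReal.ofReal_ne_top).trans (ENNReal.div_le_of_le_mul' hmean)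

lemma rigMeasure_exists_exp_mul_le_Nbig_le (h0 : 0 ≤ p) (h1 : p ≤ 1) (hm : m ≠ 0) :
    rigMeasure n m p
        {ω | ∃ k : ℕ, 5 ≤ k ∧ Real.exp (-(k * (n * p)) / 2) * m ≤ (Nbig ω k p : ℝ)} ≤
      ∑' j : ℕ, ENNReal.ofReal (Real.exp (-((j + 5) * (n * p)) / 6)) := by
  have hunion : {ω : Fin n → Fin m → Bool |
        ∃ k : ℕ, 5 ≤ k ∧ Real.exp (-(k * (n * p)) / 2) * m ≤ (Nbig ω k p : ℝ)} =
      ⋃ j : ℕ, {ω | Real.exp (-((j + 5 : ℕ) * (n * p)) / 2) * m ≤ (Nbig ω (j + 5) p : ℝ)} := by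
    ext ω
    simp only [Set.mem_ofPred_eq, Set.mem_iUnion]
    constructor
    · rintro ⟨k, hk, h⟩
      obtain ⟨j, rfl⟩ := Nat.exists_eq_add_of_le' hk
      exact ⟨j, h⟩
    · rintro ⟨j, h⟩
      exact ⟨j + 5, le_add_self, h⟩
  rw [hunion]
  refine (measure_iUnion_le _).trans (ENNReal.tsum_le_tsum fun j => ?_)
  simpa using rigMeasure_exp_mul_le_Nbig_le h0 h1 hm (Nat.le_add_left 5 j)

end RandomIntersectionGraph

lemma tendsto_tsum_ofReal_exp_neg_mul {ι : Type*} {l : Filter ι} {x : ι → ℝ}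
    (hx : Tendsto x l atTop) :
    Tendsto (fun i => ∑' j : ℕ, ENNReal.ofReal (Real.exp (-((j + 5) * x i) / 6))) l (𝓝 0) := by
  set r := ENNReal.ofReal (Real.exp (-1 / 6))
  have hr : r < 1 := by
    rw [← ENNReal.ofReal_one, ENNReal.ofReal_lt_ofReal_iff one_pos]
    exact Real.exp_lt_one_iff.2 (by norm_num)
  have hdom : ∀ᶠ i in l, ∑' j : ℕ, ENNReal.ofReal (Real.exp (-((j + 5) * x i) / 6)) ≤
      ENNReal.ofReal (Real.exp (-(5 * x i) / 6)) * ∑' j : ℕ, r ^ j := by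
    filter_upwards [hx.eventually_ge_atTop 1] with i hi
    rw [← ENNReal.tsum_mul_left]
    refine ENNReal.tsum_le_tsum fun j => ?_
    rw [← ENNReal.ofReal_pow (Real.exp_nonneg _), ← Real.exp_nat_mul,
      ← ENNReal.ofReal_mul (Real.exp_nonneg _), ← Real.exp_add]
    refine ENNReal.ofReal_le_ofReal (Real.exp_le_exp.2 ?_)
    have hj : (0 : ℝ) ≤ j := Nat.cast_nonneg j
    nlinarith
  have hlim : Tendsto (fun i => ENNReal.ofReal (Real.exp (-(5 * x i) / 6)) * ∑' j : ℕ, r ^ j)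
      l (𝓝 0) := by
    have hexp : Tendsto (fun i => Real.exp (-(5 * x i) / 6)) l (𝓝 0) :=
      Real.tendsto_exp_atBot.comp <| ((tendsto_const_mul_atBot_of_neg
        (by norm_num : (-5 / 6 : ℝ) < 0)).2 hx).congr fun i => by ring
    simpa using ENNReal.Tendsto.mul_const (ENNReal.tendsto_ofReal hexp)
      (Or.inr (ENNReal.tsum_geometric r ▸ ENNReal.inv_ne_top.2 (tsub_pos_of_lt hr).ne'))
  exact tendsto_of_tendsto_of_tendsto_of_le_of_le' tendsto_const_nhds hlim
    (.of_forall fun _ => zero_le) hdom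

/-- Equation (Eq:Nkduze): if `np → ∞`, then (eventually) the probability that some
`k ≥ 5` has `N_k ≥ e^{-knp/2} m` is at most `Σ_{k=5}^∞ e^{-knp/6}`; this sum tends
to `0`, and in particular with high probability `N_k < e^{-knp/2} m` simultaneously
for all `k ≥ 5`. -/
theorem Nk_union_bound (m : ℕ → ℕ) (p : ℕ → ℝ)
    (hp : ∀ n, 0 ≤ p n ∧ p n ≤ 1)
    (hm : Tendsto m atTop atTop)
    (hnp : Tendsto (fun n : ℕ => (n : ℝ) * p n) atTop atTop) :
    (∀ᶠ n : ℕ in atTop,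
      rigMeasure n (m n) (p n)
          {ω | ∃ k : ℕ, 5 ≤ k ∧
            Real.exp (-((k : ℝ) * ((n : ℝ) * p n)) / 2) * (m n : ℝ) ≤ (Nbig ω k (p n) : ℝ)} ≤
        ∑' j : ℕ, ENNReal.ofReal (Real.exp (-(((j : ℝ) + 5) * ((n : ℝ) * p n)) / 6))) ∧
    Tendsto (fun n : ℕ =>
        ∑' j : ℕ, ENNReal.ofReal (Real.exp (-(((j : ℝ) + 5) * ((n : ℝ) * p n)) / 6)))
      atTop (nhds 0) ∧
    Tendsto (fun n : ℕ => rigMeasure n (m n) (p n)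
        {ω | ∀ k : ℕ, 5 ≤ k →
          (Nbig ω k (p n) : ℝ) < Real.exp (-((k : ℝ) * ((n : ℝ) * p n)) / 2) * (m n : ℝ)})
      atTop (nhds 1) := by
  have hbound := (hm.eventually_ne_atTop 0).mono fun n hn =>
    rigMeasure_exists_exp_mul_le_Nbig_le (n := n) (hp n).1 (hp n).2 hn
  have htail := tendsto_tsum_ofReal_exp_neg_mul hnp
  refine ⟨hbound, htail, ?_⟩
  have hbad := tendsto_of_tendsto_of_tendsto_of_le_of_le' tendsto_const_nhds htail
    (.of_forall fun _ => zero_le) hbound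
  have hgood (n : ℕ) : rigMeasure n (m n) (p n)
      {ω | ∀ k : ℕ, 5 ≤ k →
        (Nbig ω k (p n) : ℝ) < Real.exp (-((k : ℝ) * ((n : ℝ) * p n)) / 2) * (m n : ℝ)} =
      1 - rigMeasure n (m n) (p n)
        {ω | ∃ k : ℕ, 5 ≤ k ∧
          Real.exp (-((k : ℝ) * ((n : ℝ) * p n)) / 2) * (m n : ℝ) ≤ (Nbig ω k (p n) : ℝ)} := by
    have := isProbabilityMeasure_rigMeasure (n := n) (m := m n) (hp n).1 (hp n).2
    rw [← prob_compl_eq_one_sub MeasurableSet.of_discrete]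
    congr 1
    ext ω
    simp
  simp_rw [hgood]
  simpa using ENNReal.Tendsto.sub tendsto_const_nhds hbad (Or.inl ENNReal.one_ne_top)

end RIG
end
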